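/- arXiv:1710.06247 — 5 statements merged into one kernel-verified Lean document; each statement's English description precedes it below -/
import Mathlib

section
/- Let (M^n, g, f) be a Miao-Tam critical metric with harmonic Weyl tensor and let q be a regular point; with orthonormal frame e₁ = -∇f/|∇f|, e₂,...,eₙ, one has R̊_{ij} + (R̊₁₁/(n-1))g_{ij} + ((n-2)/(n-1))W_{i1j1} = 0 for all 2 ≤ i,j ≤ n. -/
/-!
Contract `fC = T + W(·,·,·,∇f) = 0` in the slots `(i, e₁, j)`. Since `∇f = -|∇f| e₁`, the
`T` term is `-|∇f|/(n-2) ((n-1) R_ij - (R - R₁₁) δ_ij)` and the Weyl term is `-|∇f| W_i1j1`;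
dividing by `-|∇f|/(n-2)` gives `(n-1) R_ij - (R - R₁₁) δ_ij + (n-2) W_i1j1 = 0`, which is the
claim rewritten with the traceless Ricci tensor.
-/

section

variable {ι : Type*} [Fintype ι] [DecidableEq ι]

theorem sum_mul_eq_of_eq_single {df : ι → ℝ} {e : ι} {c : ℝ}
    (hdf : ∀ l, df l = if l = e then c else 0) (g : ι → ℝ) :
    ∑ l, g l * df l = c * g e := by
  simp [hdf, mul_comm]

noncomputable def miaoTamT (m R : ℝ) (Ric : ι → ι → ℝ) (df : ι → ℝ) (i j k : ι) : ℝ :=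
  (m - 1) / (m - 2) * (Ric i k * df j - Ric j k * df i)
    - R / (m - 2)
      * ((if i = k then (1 : ℝ) else 0) * df j
        - (if j = k then (1 : ℝ) else 0) * df i)
    + 1 / (m - 2)
      * ((if i = k then (1 : ℝ) else 0) * (∑ s, Ric j s * df s)
        - (if j = k then (1 : ℝ) else 0) * (∑ s, Ric i s * df s))

theorem miaoTamT_tangent_normal_tangent {m R c : ℝ} {Ric : ι → ι → ℝ} {df : ι → ℝ} {e i j : ι}
    (hdf : ∀ l, df l = if l = e then -c else 0) (hi : i ≠ e) (hj : j ≠ e) :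
    miaoTamT m R Ric df i e j
      = -c / (m - 2) * ((m - 1) * Ric i j - (R - Ric e e) * if i = j then 1 else 0) := by
  rw [miaoTamT, sum_mul_eq_of_eq_single hdf, hdf i, hdf e, if_neg hi, if_pos rfl,
    if_neg hj.symm]
  ring

end

theorem traceless_ricci_weyl_of_normal_relation {m δ R R₁₁ Rij W : ℝ}
    (hm₀ : m ≠ 0) (hm₁ : m - 1 ≠ 0)
    (h : (m - 1) * Rij - (R - R₁₁) * δ + (m - 2) * W = 0) :
    (Rij - R / m * δ) + (R₁₁ - R / m) / (m - 1) * δ + (m - 2) / (m - 1) * W = 0 := by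
  field_simp
  linear_combination m * h

theorem tangential_traceless_ricci_weyl_general (n : ℕ) (hn : 3 ≤ n)
    (c R : ℝ) (hc : 0 < c)
    (e1 : Fin n)
    (Ric : Fin n → Fin n → ℝ) (df : Fin n → ℝ)
    (W : Fin n → Fin n → Fin n → Fin n → ℝ)
    (T : Fin n → Fin n → Fin n → ℝ)
    -- ∇f = -|∇f| e₁
    (hdf : ∀ l, df l = if l = e1 then -c else 0)
    -- the auxiliary tensor T
    (hT : ∀ i j k, T i j k
      = ((n : ℝ) - 1) / ((n : ℝ) - 2) * (Ric i k * df j - Ric j k * df i)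
        - R / ((n : ℝ) - 2)
          * ((if i = k then (1 : ℝ) else 0) * df j
            - (if j = k then (1 : ℝ) else 0) * df i)
        + 1 / ((n : ℝ) - 2)
          * ((if i = k then (1 : ℝ) else 0) * (∑ s, Ric j s * df s)
            - (if j = k then (1 : ℝ) else 0) * (∑ s, Ric i s * df s)))
    -- harmonic Weyl: 0 = f C = T + W(·,·,·,∇f)
    (hC0 : ∀ i j k, T i j k + (∑ l, W i j k l * df l) = 0) :
    ∀ i j, i ≠ e1 → j ≠ e1 →
      (Ric i j - R / (n : ℝ) * (if i = j then 1 else 0))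
        + ((Ric e1 e1 - R / (n : ℝ)) / ((n : ℝ) - 1)) * (if i = j then 1 else 0)
        + ((n : ℝ) - 2) / ((n : ℝ) - 1) * W i e1 j e1 = 0 := by
  intro i j hi hj
  have hn' : (3 : ℝ) ≤ n := by exact_mod_cast hn
  have hT_normal : T i e1 j = -c / (n - 2)
      * ((n - 1) * Ric i j - (R - Ric e1 e1) * if i = j then 1 else 0) :=
    (hT i e1 j).trans (miaoTamT_tangent_normal_tangent hdf hi hj)
  have hC_normal := hC0 i e1 j
  rw [hT_normal, sum_mul_eq_of_eq_single hdf] at hC_normal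
  refine traceless_ricci_weyl_of_normal_relation (by linarith) (by linarith) ?_
  have hcoef : -c / ((n : ℝ) - 2) ≠ 0 := div_ne_zero (by linarith) (by linarith)
  refine (mul_eq_zero.mp ?_).resolve_left hcoef
  have hcancel : -c / ((n : ℝ) - 2) * ((n - 2) * W i e1 j e1) = -c * W i e1 j e1 := by
    field_simp [show (n : ℝ) - 2 ≠ 0 by linarith]
  linear_combination hC_normal + hcancel

/-- For a Miao-Tam critical metric with harmonic Weyl tensor, at a
regular point with adapted orthonormal frame `e₁ = -∇f/|∇f|, e₂, …, eₙ`, one has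
`R̊_{ij} + (R̊₁₁/(n-1))g_{ij} + ((n-2)/(n-1))W_{i1j1} = 0` for all `i, j ≥ 2`.
Stated at a point: `e1` is the distinguished frame index, `c = |∇f| > 0`,
`df = -c·e₁`, the vanishing of `fC = T + W(·,·,·,∇f)` is a hypothesis. -/
theorem tangential_traceless_ricci_weyl (n : ℕ) (hn : 3 ≤ n)
    (c R : ℝ) (hc : 0 < c)
    (e1 : Fin n)
    (Ric : Fin n → Fin n → ℝ) (df : Fin n → ℝ)
    (W : Fin n → Fin n → Fin n → Fin n → ℝ)
    (T : Fin n → Fin n → Fin n → ℝ)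
    (hRicSym : ∀ i j, Ric i j = Ric j i)
    (hR : R = ∑ i, Ric i i)
    -- ∇f = -|∇f| e₁
    (hdf : ∀ l, df l = if l = e1 then -c else 0)
    -- the auxiliary tensor T
    (hT : ∀ i j k, T i j k
      = ((n : ℝ) - 1) / ((n : ℝ) - 2) * (Ric i k * df j - Ric j k * df i)
        - R / ((n : ℝ) - 2)
          * ((if i = k then (1 : ℝ) else 0) * df j
            - (if j = k then (1 : ℝ) else 0) * df i)
        + 1 / ((n : ℝ) - 2)
          * ((if i = k then (1 : ℝ) else 0) * (∑ s, Ric j s * df s)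
            - (if j = k then (1 : ℝ) else 0) * (∑ s, Ric i s * df s)))
    -- harmonic Weyl: 0 = f C = T + W(·,·,·,∇f)
    (hC0 : ∀ i j k, T i j k + (∑ l, W i j k l * df l) = 0) :
    ∀ i j, i ≠ e1 → j ≠ e1 →
      (Ric i j - R / (n : ℝ) * (if i = j then 1 else 0))
        + ((Ric e1 e1 - R / (n : ℝ)) / ((n : ℝ) - 1)) * (if i = j then 1 else 0)
        + ((n : ℝ) - 2) / ((n : ℝ) - 1) * W i e1 j e1 = 0 :=
  tangential_traceless_ricci_weyl_general n hn c R hc e1 Ric df W T hdf hT hC0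
end

section
/- Under the conditions of the previous identity (Miao-Tam critical metric, harmonic Weyl, regular point, adapted frame), the squared norm of the traceless Ricci tensor satisfies |Ric̊|² = n/(n-1)·R̊₁₁² + ((n-2)/(n-1))²·|Wᵛ|², where |Wᵛ|² = Σ_{i,j≥2} W_{i1j1}². -/
/-!
The `e₁`-row and `e₁`-column of `R̊` vanish off the diagonal, so `|R̊|²` is `R̊₁₁²` plus the
squared norm of the block on `e₁^⊥`. There `R̊ = -(a·I + b·Wᵛ)` with `a = R̊₁₁/(n-1)`,
`b = (n-2)/(n-1)`, and `Wᵛ` is traceless, hence orthogonal to `I`; so the block contributes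
`a²(n-1) + b²|Wᵛ|²`, and `R̊₁₁² + R̊₁₁²/(n-1) = n/(n-1)·R̊₁₁²`.
-/

open Finset

theorem sum_sq_scalar_add_of_trace_eq_zero {ι : Type*} [DecidableEq ι] (s : Finset ι)
    (a : ℝ) (V : ι → ι → ℝ) (htr : ∑ i ∈ s, V i i = 0) :
    ∑ i ∈ s, ∑ j ∈ s, (a * (if i = j then 1 else 0) + V i j) ^ 2
      = a ^ 2 * #s + ∑ i ∈ s, ∑ j ∈ s, V i j ^ 2 := by
  have hexpand : ∀ i j, (a * (if i = j then 1 else 0) + V i j) ^ 2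
      = a ^ 2 * (if i = j then 1 else 0) + 2 * a * (if i = j then V i j else 0) + V i j ^ 2 := by
    intro i j
    split_ifs <;> ring
  simp only [hexpand, sum_add_distrib, ← mul_sum, sum_ite_eq]
  simp only [sum_ite_mem, inter_self, sum_const, nsmul_eq_mul, mul_one, htr, mul_zero, add_zero]

theorem sum_sq_eq_sq_add_sum_sq_erase {ι : Type*} [Fintype ι] [DecidableEq ι]
    (M : ι → ι → ℝ) (k : ι) (hrow : ∀ j, j ≠ k → M k j = 0) (hcol : ∀ i, i ≠ k → M i k = 0) :
    ∑ i, ∑ j, M i j ^ 2 = M k k ^ 2 + ∑ i ∈ univ.erase k, ∑ j ∈ univ.erase k, M i j ^ 2 := by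
  rw [← add_sum_erase _ _ (mem_univ k), ← add_sum_erase _ _ (mem_univ k),
    sum_eq_zero fun j hj => by rw [hrow j (ne_of_mem_erase hj), sq, zero_mul], add_zero]
  refine congrArg _ (sum_congr rfl fun i hi => ?_)
  rw [← add_sum_erase _ _ (mem_univ k), hcol i (ne_of_mem_erase hi), sq, zero_mul, zero_add]

/-- In the setting of the previous identity (Miao-Tam critical
metric, harmonic Weyl, regular point, adapted frame `e₁ = -∇f/|∇f|`), the
squared norm of the traceless Ricci tensor satisfies
`|Ric̊|² = n/(n-1)·R̊₁₁² + ((n-2)/(n-1))²·|Wᵛ|²`, where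
`|Wᵛ|² = ∑_{i,j ≥ 2} W_{i1j1}²`. -/
theorem norm_traceless_ricci_decomposition (n : ℕ) (hn : 3 ≤ n)
    (e1 : Fin n)
    (Rt : Fin n → Fin n → ℝ)
    (W : Fin n → Fin n → Fin n → Fin n → ℝ)
    (hsym : ∀ i j, Rt i j = Rt j i)
    -- ∇f is a Ricci eigenvector: R̊_{1a} = 0 for a ≥ 2
    (h1a : ∀ a, a ≠ e1 → Rt e1 a = 0)
    -- antisymmetry of Weyl in the first two indices
    (hWanti : ∀ i j k l, W i j k l = - W j i k l)
    -- trace-freeness of Weyl: ∑ᵢ W_{i1i1} = 0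
    (hWtf : ∑ i, W i e1 i e1 = 0)
    -- the identity R̊_{ij} + (R̊₁₁/(n-1))g_{ij} + ((n-2)/(n-1))W_{i1j1} = 0, i,j ≥ 2
    (hkey : ∀ i j, i ≠ e1 → j ≠ e1 →
      Rt i j + Rt e1 e1 / ((n : ℝ) - 1) * (if i = j then 1 else 0)
        + ((n : ℝ) - 2) / ((n : ℝ) - 1) * W i e1 j e1 = 0) :
    ∑ i, ∑ j, (Rt i j) ^ 2
      = (n : ℝ) / ((n : ℝ) - 1) * (Rt e1 e1) ^ 2
        + (((n : ℝ) - 2) / ((n : ℝ) - 1)) ^ 2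
          * ∑ i ∈ Finset.univ.filter (fun i => i ≠ e1),
              ∑ j ∈ Finset.univ.filter (fun j => j ≠ e1), (W i e1 j e1) ^ 2 := by
  have hn1 : ((n : ℝ) - 1) ≠ 0 := by
    have : (3 : ℝ) ≤ n := by exact_mod_cast hn
    linarith
  set a := Rt e1 e1 / ((n : ℝ) - 1)
  set b := ((n : ℝ) - 2) / ((n : ℝ) - 1)
  have hblock : ∀ i ∈ univ.erase e1, ∀ j ∈ univ.erase e1,
      Rt i j ^ 2 = (a * (if i = j then 1 else 0) + b * W i e1 j e1) ^ 2 := by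
    intro i hi j hj
    rw [← neg_sq]
    congr 1
    linarith [hkey i j (ne_of_mem_erase hi) (ne_of_mem_erase hj)]
  have htrace : ∑ i ∈ univ.erase e1, b * W i e1 i e1 = 0 := by
    have hW11 : W e1 e1 e1 e1 = 0 := by linarith [hWanti e1 e1 e1 e1]
    rw [← mul_sum, sum_erase _ (f := fun i => W i e1 i e1) hW11, hWtf, mul_zero]
  have hcard : ((#(univ.erase e1) : ℕ) : ℝ) = (n : ℝ) - 1 := by
    rw [card_erase_of_mem (mem_univ e1), card_univ, Fintype.card_fin,
      Nat.cast_sub (by omega), Nat.cast_one]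
  rw [filter_ne', sum_sq_eq_sq_add_sum_sq_erase Rt e1 h1a fun i hi => hsym i e1 ▸ h1a i hi,
    sum_congr rfl fun i hi => sum_congr rfl (hblock i hi),
    sum_sq_scalar_add_of_trace_eq_zero _ _ _ htrace, hcard]
  simp only [a, mul_pow, ← mul_sum]
  field_simp
  ring
end

section
/- Let (M, g, f) be a Bach-flat Miao-Tam critical metric (so T ≡ 0 and C ≡ 0). For a regular level set Σ_c = {f = c}, c ≠ 0, the second fundamental form with respect to ν = -∇f/|∇f| satisfies II_{ab} = (1/|∇f|)[-f R_{ab} + ((Rf+1)/(n-1))g_{ab}], which combined with II_{ab} = (H/(n-1))g_{ab} gives R_{ab} = ((R - R₁₁)/(n-1))g_{ab} for all 2 ≤ a,b ≤ n. -/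
/-! On a level set the normal direction drops out of the Miao-Tam equation: restricted to
tangential directions it expresses the Hessian of `f`, hence `II = -(1/|∇f|) Hess f`, through
`f Ric` and the metric, once `Δf` is eliminated using the trace `Δf = -(Rf + n)/(n - 1)`.
Comparing the resulting formula for `II` with umbilicity `II = H/(n-1) g`,
`H = (1/|∇f|)(f R₁₁ + 1)`, the terms `1/(n-1) g` cancel and dividing by `f` leaves
`R_{ab} = (R - R₁₁)/(n-1) g_{ab}`. -/

section MiaoTam

variable {n R f Δf g Ric Hess : ℝ}

theorem one_add_laplacian_eq_of_trace (hn : n - 1 ≠ 0) (htrace : Δf = -(R * f + n) / (n - 1)) :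
    1 + Δf = -(R * f + 1) / (n - 1) := by
  rw [htrace]
  field_simp
  ring

theorem hessian_eq_of_miaoTam (hn : n - 1 ≠ 0) (hMT : -Δf * g + Hess - f * Ric = g)
    (htrace : Δf = -(R * f + n) / (n - 1)) :
    Hess = f * Ric - (R * f + 1) / (n - 1) * g := by
  have hΔ := one_add_laplacian_eq_of_trace hn htrace
  linear_combination hMT + g * hΔ

theorem secondFundamentalForm_eq_of_miaoTam {c II : ℝ} (hn : n - 1 ≠ 0)
    (hMT : -Δf * g + Hess - f * Ric = g) (htrace : Δf = -(R * f + n) / (n - 1))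
    (hII : II = -(1 / c) * Hess) :
    II = (1 / c) * (-(f * Ric) + (R * f + 1) / (n - 1) * g) := by
  rw [hII, hessian_eq_of_miaoTam hn hMT htrace]
  ring

theorem ricci_eq_of_umbilic {c II R₁₁ : ℝ} (hc : c ≠ 0) (hf : f ≠ 0)
    (hII : II = (1 / c) * (-(f * Ric) + (R * f + 1) / (n - 1) * g))
    (humb : II = (1 / c) * (f * R₁₁ + 1) / (n - 1) * g) :
    Ric = (R - R₁₁) / (n - 1) * g := by
  have hcancel : -(f * Ric) + (R * f + 1) / (n - 1) * g = (f * R₁₁ + 1) / (n - 1) * g :=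
    mul_left_cancel₀ (one_div_ne_zero hc) (by rw [← hII, humb]; ring)
  have hfRic : f * Ric = f * ((R - R₁₁) / (n - 1) * g) := by linear_combination -hcancel
  exact mul_left_cancel₀ hf hfRic

end MiaoTam

theorem level_set_second_fundamental_form_general (n : ℕ) (hn : 3 ≤ n)
    (e1 : Fin n)
    (f Δf R H c : ℝ) (hc : 0 < c) (hf : 0 < f)
    (g Ric Hess II : Fin n → Fin n → ℝ)
    -- the Miao-Tam equation and its trace
    (hMT : ∀ i j, -(Δf) * g i j + Hess i j - f * Ric i j = g i j)
    (htrace : Δf = -(R * f + (n : ℝ)) / ((n : ℝ) - 1))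
    -- second fundamental form of the level set (c = |∇f|)
    (hII : ∀ a b, a ≠ e1 → b ≠ e1 → II a b = -(1 / c) * Hess a b)
    -- mean curvature
    (hH : H = (1 / c) * (f * Ric e1 e1 + 1))
    -- umbilicity coming from T ≡ 0
    (humb : ∀ a b, a ≠ e1 → b ≠ e1 → II a b = H / ((n : ℝ) - 1) * g a b) :
    (∀ a b, a ≠ e1 → b ≠ e1 →
      II a b = (1 / c) * (-(f * Ric a b) + (R * f + 1) / ((n : ℝ) - 1) * g a b))
    ∧ (∀ a b, a ≠ e1 → b ≠ e1 →
      Ric a b = (R - Ric e1 e1) / ((n : ℝ) - 1) * g a b) := by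
  have hn1 : (n : ℝ) - 1 ≠ 0 := by
    have : (3 : ℝ) ≤ n := by exact_mod_cast hn
    linarith
  have hIIformula : ∀ a b, a ≠ e1 → b ≠ e1 →
      II a b = (1 / c) * (-(f * Ric a b) + (R * f + 1) / ((n : ℝ) - 1) * g a b) :=
    fun a b ha hb => secondFundamentalForm_eq_of_miaoTam hn1 (hMT a b) htrace (hII a b ha hb)
  refine ⟨hIIformula, fun a b ha hb => ricci_eq_of_umbilic hc.ne' hf.ne' (hIIformula a b ha hb) ?_⟩
  rw [humb a b ha hb, hH]

/-- For a Bach-flat Miao-Tam critical metric and a regular level set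
`Σ_c = {f = c}` (`c ≠ 0`, `f > 0` inside), with `ν = -∇f/|∇f|` (frame index `e1`),
the second fundamental form satisfies
`II_{ab} = (1/|∇f|)[-fR_{ab} + ((Rf+1)/(n-1))g_{ab}]`, which combined with the
umbilicity `II_{ab} = (H/(n-1))g_{ab}` gives
`R_{ab} = ((R - R₁₁)/(n-1))g_{ab}` for all tangential `a, b`. -/
theorem level_set_second_fundamental_form (n : ℕ) (hn : 3 ≤ n)
    (e1 : Fin n)
    (f Δf R H c : ℝ) (hc : 0 < c) (hf : 0 < f)
    (g Ric Hess II : Fin n → Fin n → ℝ)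
    (hg : ∀ i j, g i j = if i = j then 1 else 0)
    -- the Miao-Tam equation and its trace
    (hMT : ∀ i j, -(Δf) * g i j + Hess i j - f * Ric i j = g i j)
    (htrace : Δf = -(R * f + (n : ℝ)) / ((n : ℝ) - 1))
    -- second fundamental form of the level set (c = |∇f|)
    (hII : ∀ a b, a ≠ e1 → b ≠ e1 → II a b = -(1 / c) * Hess a b)
    -- mean curvature
    (hH : H = (1 / c) * (f * Ric e1 e1 + 1))
    -- umbilicity coming from T ≡ 0
    (humb : ∀ a b, a ≠ e1 → b ≠ e1 → II a b = H / ((n : ℝ) - 1) * g a b) :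
    (∀ a b, a ≠ e1 → b ≠ e1 →
      II a b = (1 / c) * (-(f * Ric a b) + (R * f + 1) / ((n : ℝ) - 1) * g a b))
    ∧ (∀ a b, a ≠ e1 → b ≠ e1 →
      Ric a b = (R - Ric e1 e1) / ((n : ℝ) - 1) * g a b) :=
  level_set_second_fundamental_form_general n hn e1 f Δf R H c hc hf g Ric Hess II hMT htrace hII hH
    humb
end

section
/- Let (M, g, f) be a Bach-flat Miao-Tam critical metric (so W_{ijkl}∇_l f = 0 and the level sets are umbilic with R_{ab} = ((R-R₁₁)/(n-1))g_{ab}). Then for a regular level set Σ_c, c ≠ 0, the Gauss equation yields R^Σ_{abcd} = W_{abcd} + 1/((n-1)(n-2))[R - 2R₁₁ + (n-2)H²/(n-1)](g_{ac}g_{bd} - g_{ad}g_{bc}), and hence the induced Ricci curvature satisfies R^Σ_{ab} = 1/(n-1)[R - 2R₁₁ + (n-2)H²/(n-1)]g_{ab}, i.e. Σ_c is Einstein. -/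
/-!
On a level set the Weyl part of the ambient curvature restricts unchanged, while the Ricci part
and the umbilic Gauss term are both multiples of `g ∧ g`, because the tangential Ricci tensor
is pure trace. So `R^Σ` is Weyl plus constant curvature. Tracing over the level set kills the
Weyl part, since `W` is trace-free and its normal component vanishes, and leaves an Einstein
Ricci tensor.
-/

open Finset

/-- Kronecker delta in an orthonormal frame. -/
noncomputable def kd {n : ℕ} (i j : Fin n) : ℝ := if i = j then 1 else 0

section KroneckerSums

variable {n : ℕ}

lemma sum_ne_kd_self (e : Fin n) : ∑ i ∈ univ.filter (· ≠ e), kd i i = (n : ℝ) - 1 := by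
  simp [kd, Finset.filter_ne', Finset.card_erase_of_mem, Nat.cast_sub (Fin.pos e)]

lemma sum_ne_kd_mul_kd {e b : Fin n} (a : Fin n) (hb : b ≠ e) :
    ∑ i ∈ univ.filter (· ≠ e), kd i b * kd a i = kd a b := by
  rw [Finset.sum_eq_single_of_mem b (by simpa using hb) fun i _ hib => by simp [kd, hib]]
  simp [kd]

lemma sum_ne_trace_kulkarni {e b : Fin n} (a : Fin n) (hb : b ≠ e) :
    ∑ i ∈ univ.filter (· ≠ e), (kd i i * kd a b - kd i b * kd a i) = ((n : ℝ) - 2) * kd a b := by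
  rw [Finset.sum_sub_distrib, ← Finset.sum_mul, sum_ne_kd_self, sum_ne_kd_mul_kd a hb]
  ring

end KroneckerSums

/-- The factor `n - 2` is `(n - 1) - 1`, the level set having dimension `n - 1`. -/
lemma sum_ne_eq_of_eq_add_kulkarni {n : ℕ} {e : Fin n} {W RS : Fin n → Fin n → Fin n → Fin n → ℝ}
    {κ : ℝ} (hRS : ∀ a b c d, a ≠ e → b ≠ e → c ≠ e → d ≠ e →
      RS a b c d = W a b c d + κ * (kd a c * kd b d - kd a d * kd b c))
    (hW : ∀ a b, ∑ i ∈ univ.filter (· ≠ e), W i a i b = 0) {a b : Fin n} (ha : a ≠ e)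
    (hb : b ≠ e) :
    ∑ i ∈ univ.filter (· ≠ e), RS i a i b = ((n : ℝ) - 2) * κ * kd a b := by
  have hsplit : ∀ i ∈ univ.filter (· ≠ e), RS i a i b
      = W i a i b + κ * (kd i i * kd a b - kd i b * kd a i) := fun i hi =>
    hRS i a i b (Finset.mem_filter.mp hi).2 ha (Finset.mem_filter.mp hi).2 hb
  rw [Finset.sum_congr rfl hsplit, Finset.sum_add_distrib, hW, ← Finset.mul_sum,
    sum_ne_trace_kulkarni a hb]
  ring

theorem level_set_einstein_general (n : ℕ) (hn : 3 ≤ n)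
    (e1 : Fin n) (R R11 H : ℝ)
    (Ric RicS : Fin n → Fin n → ℝ)
    (Riem W RS : Fin n → Fin n → Fin n → Fin n → ℝ)
    -- tangential Ricci curvature and R_{1a} = 0
    (hRictan : ∀ a b, a ≠ e1 → b ≠ e1 →
      Ric a b = (R - R11) / ((n : ℝ) - 1) * kd a b)
    -- Weyl decomposition of the curvature tensor
    (hWeyl : ∀ i j k l, Riem i j k l
      = W i j k l
        + 1 / ((n : ℝ) - 2)
          * (Ric i k * kd j l + Ric j l * kd i k - Ric i l * kd j k - Ric j k * kd i l)
        - R / (((n : ℝ) - 1) * ((n : ℝ) - 2)) * (kd j l * kd i k - kd i l * kd j k))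
    -- Gauss equation with the umbilic second fundamental form II = (H/(n-1))g
    (hGauss : ∀ a b c d, a ≠ e1 → b ≠ e1 → c ≠ e1 → d ≠ e1 →
      RS a b c d = Riem a b c d
        + (H / ((n : ℝ) - 1)) ^ 2 * (kd a c * kd b d - kd a d * kd b c))
    -- W(·,·,·,∇f) = 0 in every slot (Bach-flatness)
    (hWnu : ∀ i j k,
      W i j k e1 = 0 ∧ W i j e1 k = 0 ∧ W i e1 j k = 0 ∧ W e1 i j k = 0)
    -- trace-freeness of the Weyl tensor
    (hWtf : ∀ j l, ∑ i, W i j i l = 0)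
    -- induced Ricci curvature of the level set
    (hRicS : ∀ a b, a ≠ e1 → b ≠ e1 →
      RicS a b = ∑ i ∈ Finset.univ.filter (fun i => i ≠ e1), RS i a i b) :
    (∀ a b c d, a ≠ e1 → b ≠ e1 → c ≠ e1 → d ≠ e1 →
      RS a b c d = W a b c d
        + 1 / (((n : ℝ) - 1) * ((n : ℝ) - 2))
          * (R - 2 * R11 + ((n : ℝ) - 2) * H ^ 2 / ((n : ℝ) - 1))
          * (kd a c * kd b d - kd a d * kd b c))
    ∧ (∀ a b, a ≠ e1 → b ≠ e1 →
      RicS a b = 1 / ((n : ℝ) - 1)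
        * (R - 2 * R11 + ((n : ℝ) - 2) * H ^ 2 / ((n : ℝ) - 1)) * kd a b) := by
  have hn3 : (3 : ℝ) ≤ n := by exact_mod_cast hn
  have hn1 : (n : ℝ) - 1 ≠ 0 := by linarith
  have hn2 : (n : ℝ) - 2 ≠ 0 := by linarith
  have hRS : ∀ a b c d, a ≠ e1 → b ≠ e1 → c ≠ e1 → d ≠ e1 →
      RS a b c d = W a b c d
        + 1 / (((n : ℝ) - 1) * ((n : ℝ) - 2))
          * (R - 2 * R11 + ((n : ℝ) - 2) * H ^ 2 / ((n : ℝ) - 1))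
          * (kd a c * kd b d - kd a d * kd b c) := by
    intro a b c d ha hb hc hd
    rw [hGauss a b c d ha hb hc hd, hWeyl, hRictan a c ha hc, hRictan b d hb hd,
      hRictan a d ha hd, hRictan b c hb hc]
    field_simp
    ring
  have hWtan : ∀ a b, ∑ i ∈ univ.filter (· ≠ e1), W i a i b = 0 := fun a b => by
    have hnormal : ∀ i ∈ univ, W i a i b ≠ 0 → i ≠ e1 := fun i _ hWi hie =>
      hWi (hie ▸ (hWnu a e1 b).2.2.2)
    rw [Finset.sum_filter_of_ne hnormal, hWtf a b]
  refine ⟨hRS, fun a b ha hb => ?_⟩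
  rw [hRicS a b ha hb, sum_ne_eq_of_eq_add_kulkarni hRS hWtan ha hb]
  field_simp

/-- For a Bach-flat Miao-Tam critical metric (so `W(·,·,·,∇f) = 0`
and regular level sets are umbilic with `R_{ab} = ((R-R₁₁)/(n-1))g_{ab}`), the
Gauss equation yields, on a regular level set `Σ_c` (`c ≠ 0`),
`R^Σ_{abcd} = W_{abcd} + (1/((n-1)(n-2)))[R - 2R₁₁ + (n-2)H²/(n-1)](g_{ac}g_{bd} - g_{ad}g_{bc})`,
hence `R^Σ_{ab} = (1/(n-1))[R - 2R₁₁ + (n-2)H²/(n-1)]g_{ab}`, i.e. `Σ_c` is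
Einstein.  Stated in an adapted orthonormal frame with normal index `e1`. -/
theorem level_set_einstein (n : ℕ) (hn : 3 ≤ n)
    (e1 : Fin n) (R R11 H : ℝ)
    (Ric RicS : Fin n → Fin n → ℝ)
    (Riem W RS : Fin n → Fin n → Fin n → Fin n → ℝ)
    (hR11 : R11 = Ric e1 e1)
    -- tangential Ricci curvature and R_{1a} = 0
    (hRictan : ∀ a b, a ≠ e1 → b ≠ e1 →
      Ric a b = (R - R11) / ((n : ℝ) - 1) * kd a b)
    (hRic1a : ∀ a, a ≠ e1 → Ric e1 a = 0 ∧ Ric a e1 = 0)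
    -- Weyl decomposition of the curvature tensor
    (hWeyl : ∀ i j k l, Riem i j k l
      = W i j k l
        + 1 / ((n : ℝ) - 2)
          * (Ric i k * kd j l + Ric j l * kd i k - Ric i l * kd j k - Ric j k * kd i l)
        - R / (((n : ℝ) - 1) * ((n : ℝ) - 2)) * (kd j l * kd i k - kd i l * kd j k))
    -- Gauss equation with the umbilic second fundamental form II = (H/(n-1))g
    (hGauss : ∀ a b c d, a ≠ e1 → b ≠ e1 → c ≠ e1 → d ≠ e1 →
      RS a b c d = Riem a b c d
        + (H / ((n : ℝ) - 1)) ^ 2 * (kd a c * kd b d - kd a d * kd b c))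
    -- W(·,·,·,∇f) = 0 in every slot (Bach-flatness)
    (hWnu : ∀ i j k,
      W i j k e1 = 0 ∧ W i j e1 k = 0 ∧ W i e1 j k = 0 ∧ W e1 i j k = 0)
    -- trace-freeness of the Weyl tensor
    (hWtf : ∀ j l, ∑ i, W i j i l = 0)
    -- induced Ricci curvature of the level set
    (hRicS : ∀ a b, a ≠ e1 → b ≠ e1 →
      RicS a b = ∑ i ∈ Finset.univ.filter (fun i => i ≠ e1), RS i a i b) :
    (∀ a b c d, a ≠ e1 → b ≠ e1 → c ≠ e1 → d ≠ e1 →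
      RS a b c d = W a b c d
        + 1 / (((n : ℝ) - 1) * ((n : ℝ) - 2))
          * (R - 2 * R11 + ((n : ℝ) - 2) * H ^ 2 / ((n : ℝ) - 1))
          * (kd a c * kd b d - kd a d * kd b c))
    ∧ (∀ a b, a ≠ e1 → b ≠ e1 →
      RicS a b = 1 / ((n : ℝ) - 1)
        * (R - 2 * R11 + ((n : ℝ) - 2) * H ^ 2 / ((n : ℝ) - 1)) * kd a b) :=
  level_set_einstein_general n hn e1 R R11 H Ric RicS Riem W RS hRictan hWeyl hGauss hWnu hWtf hRicS
end

section
/- Let (M, g, f) be a Miao-Tam critical metric with harmonic Weyl tensor such that W_{i1j1} ≡ 0 at every regular point (where e₁ = -∇f/|∇f|). Then the tensor T vanishes identically: |T|² = -(n-1)/(n-2)·W_{ijkl}∇_l f(∇_j f R_{ik} - ∇_i f R_{jk}) = 0, and consequently W_{ijkl}∇_l f = 0. -/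
/-! Since `∇f` is a Ricci eigenvector, `T_{ijk} = F_{ik} ∇_j f - F_{jk} ∇_i f` with
`F = ((n-1) Ric + (μ - R) g) / (n-2)` (`μ` the eigenvalue). As `∇f = -c e₁`, the hypothesis `W_{i1j1} = 0` says
`T_{i1k} = 0`, which forces `F_{ik} = 0` for `i ≠ 1`; then every component of `T` vanishes,
hence so does `W_{ijkl} ∇_l f = -T_{ijk}`, and both sides of the claimed identity are zero. -/

open Finset

theorem T_eq_wedge_of_ricci_eigenvector {ι : Type*} [Fintype ι] [DecidableEq ι] {n : ℕ}
    {R μ : ℝ} {Ric : ι → ι → ℝ} {df : ι → ℝ} {T : ι → ι → ι → ℝ}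
    (hEig : ∀ i, ∑ k, Ric i k * df k = μ * df i)
    (hT : ∀ i j k, T i j k
      = ((n : ℝ) - 1) / ((n : ℝ) - 2) * (Ric i k * df j - Ric j k * df i)
        - R / ((n : ℝ) - 2)
          * ((if i = k then (1 : ℝ) else 0) * df j
            - (if j = k then (1 : ℝ) else 0) * df i)
        + 1 / ((n : ℝ) - 2)
          * ((if i = k then (1 : ℝ) else 0) * (∑ s, Ric j s * df s)
            - (if j = k then (1 : ℝ) else 0) * (∑ s, Ric i s * df s)))
    (i j k : ι) :
    let F : ι → ι → ℝ := fun i k =>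
      (((n : ℝ) - 1) * Ric i k + (μ - R) * (if i = k then 1 else 0)) / ((n : ℝ) - 2)
    T i j k = F i k * df j - F j k * df i := by
  rw [hT, hEig, hEig]
  ring

theorem eq_zero_of_eq_wedge_of_contract_eq_zero {ι K : Type*} [CommRing K] [NoZeroDivisors K]
    {F : ι → ι → K} {v : ι → K} {T : ι → ι → ι → K} {e : ι}
    (hv : ∀ i, i ≠ e → v i = 0) (he : v e ≠ 0)
    (hT : ∀ i j k, T i j k = F i k * v j - F j k * v i) (hTe : ∀ i k, T i e k = 0)
    (i j k : ι) : T i j k = 0 := by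
  have hF : ∀ i k, i ≠ e → F i k = 0 := fun i k hi => by
    have h := hTe i k
    rw [hT, hv i hi, mul_zero, sub_zero] at h
    exact (mul_eq_zero.mp h).resolve_right he
  rw [hT]
  by_cases hi : i = e
  · subst hi
    by_cases hj : j = i
    · rw [hj, sub_self]
    · simp [hv j hj, hF j k hj]
  · simp [hF i k hi, hv i hi]

theorem T_vanishes_and_weyl_gradf_zero_general (n : ℕ)
    (e1 : Fin n) (c R : ℝ) (hc : 0 < c)
    (Ric : Fin n → Fin n → ℝ) (df : Fin n → ℝ)
    (W : Fin n → Fin n → Fin n → Fin n → ℝ)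
    (T : Fin n → Fin n → Fin n → ℝ)
    -- ∇f = -|∇f| e₁
    (hdf : ∀ l, df l = if l = e1 then -c else 0)
    -- ∇f is a Ricci eigenvector
    (hEig : ∀ i, ∑ k, Ric i k * df k = Ric e1 e1 * df i)
    -- the auxiliary tensor T
    (hT : ∀ i j k, T i j k
      = ((n : ℝ) - 1) / ((n : ℝ) - 2) * (Ric i k * df j - Ric j k * df i)
        - R / ((n : ℝ) - 2)
          * ((if i = k then (1 : ℝ) else 0) * df j
            - (if j = k then (1 : ℝ) else 0) * df i)
        + 1 / ((n : ℝ) - 2)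
          * ((if i = k then (1 : ℝ) else 0) * (∑ s, Ric j s * df s)
            - (if j = k then (1 : ℝ) else 0) * (∑ s, Ric i s * df s)))
    -- vanishing Cotton tensor: 0 = fC = T + W(·,·,·,∇f)
    (hTW : ∀ i j k, T i j k = -(∑ l, W i j k l * df l))
    -- Wᵛ = 0
    (hWv : ∀ i j, W i e1 j e1 = 0) :
    ((∑ i, ∑ j, ∑ k, (T i j k) ^ 2)
      = -(((n : ℝ) - 1) / ((n : ℝ) - 2))
          * ∑ i, ∑ j, ∑ k, ∑ l,
              W i j k l * df l * (df j * Ric i k - df i * Ric j k))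
    ∧ ((∑ i, ∑ j, ∑ k, (T i j k) ^ 2) = 0)
    ∧ (∀ i j k, (∑ l, W i j k l * df l) = 0) := by
  have hTe : ∀ i k, T i e1 k = 0 := fun i k => by
    simp only [hTW, hdf, mul_ite, mul_zero, sum_ite_eq', mem_univ, if_true, hWv, zero_mul,
      neg_zero]
  have hT0 : ∀ i j k, T i j k = 0 :=
    eq_zero_of_eq_wedge_of_contract_eq_zero (e := e1) (fun i hi => by simp [hdf, hi])
      (by simp [hdf, hc.ne']) (T_eq_wedge_of_ricci_eigenvector hEig hT) hTe
  have hWdf : ∀ i j k, ∑ l, W i j k l * df l = 0 := fun i j k => by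
    rw [← neg_eq_zero, ← hTW, hT0]
  have hRHS : ∀ i j k, ∑ l, W i j k l * df l * (df j * Ric i k - df i * Ric j k) = 0 :=
    fun i j k => by rw [← sum_mul, hWdf, zero_mul]
  simp only [hT0, hRHS, hWdf, ne_eq, OfNat.ofNat_ne_zero, not_false_eq_true, zero_pow,
    sum_const_zero, mul_zero, implies_true, and_self]

/-- For a Miao-Tam critical metric with harmonic Weyl tensor such
that `W_{i1j1} ≡ 0` at every regular point (`e₁ = -∇f/|∇f|`), the auxiliary tensor
`T` vanishes identically:
`|T|² = -(n-1)/(n-2)·W_{ijkl}∇ₗf(∇ⱼfR_{ik} - ∇ᵢfR_{jk}) = 0`,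
and consequently `W_{ijkl}∇ₗf = 0`.  Stated at a regular point in an adapted
orthonormal frame with `∇f = -c·e₁`, `c > 0`, where vanishing of the Cotton
tensor gives `T_{ijk} = -W_{ijkl}∇ₗf`. -/
theorem T_vanishes_and_weyl_gradf_zero (n : ℕ) (hn : 3 ≤ n)
    (e1 : Fin n) (c R : ℝ) (hc : 0 < c)
    (Ric : Fin n → Fin n → ℝ) (df : Fin n → ℝ)
    (W : Fin n → Fin n → Fin n → Fin n → ℝ)
    (T : Fin n → Fin n → Fin n → ℝ)
    (hRicSym : ∀ i j, Ric i j = Ric j i)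
    -- ∇f = -|∇f| e₁
    (hdf : ∀ l, df l = if l = e1 then -c else 0)
    -- ∇f is a Ricci eigenvector
    (hEig : ∀ i, ∑ k, Ric i k * df k = Ric e1 e1 * df i)
    -- the auxiliary tensor T
    (hT : ∀ i j k, T i j k
      = ((n : ℝ) - 1) / ((n : ℝ) - 2) * (Ric i k * df j - Ric j k * df i)
        - R / ((n : ℝ) - 2)
          * ((if i = k then (1 : ℝ) else 0) * df j
            - (if j = k then (1 : ℝ) else 0) * df i)
        + 1 / ((n : ℝ) - 2)
          * ((if i = k then (1 : ℝ) else 0) * (∑ s, Ric j s * df s)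
            - (if j = k then (1 : ℝ) else 0) * (∑ s, Ric i s * df s)))
    -- vanishing Cotton tensor: 0 = fC = T + W(·,·,·,∇f)
    (hTW : ∀ i j k, T i j k = -(∑ l, W i j k l * df l))
    -- Wᵛ = 0
    (hWv : ∀ i j, W i e1 j e1 = 0)
    -- trace-freeness of the Weyl tensor
    (hWtf13 : ∀ j l, ∑ i, W i j i l = 0)
    (hWtf23 : ∀ i l, ∑ j, W i j j l = 0) :
    ((∑ i, ∑ j, ∑ k, (T i j k) ^ 2)
      = -(((n : ℝ) - 1) / ((n : ℝ) - 2))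
          * ∑ i, ∑ j, ∑ k, ∑ l,
              W i j k l * df l * (df j * Ric i k - df i * Ric j k))
    ∧ ((∑ i, ∑ j, ∑ k, (T i j k) ^ 2) = 0)
    ∧ (∀ i j k, (∑ l, W i j k l * df l) = 0) :=
  T_vanishes_and_weyl_gradf_zero_general n e1 c R hc Ric df W T hdf hEig hT hTW hWv
end
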